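/- arXiv:2012.13879 — 6 statements merged into one kernel-verified Lean document; each statement's English description precedes it below -/
import Mathlib

section
/- For every twice-differentiable function f : (0,∞) → ℝ and every y > 0, the factorization H = A*A holds: A*(A f)(y) = −f''(y) − f'(y)/y + V(y)·f(y)/y² = (H f)(y). Moreover the potential satisfies the identities V(y) = y·Z'(y) + Z(y)² and V(y)/y² = 1/y² − 2(1+Z(y))² for all y > 0. -/
noncomputable section

/-- `Z(y) = (1-y²)/(1+y²)`. -/
def Zf (y : ℝ) : ℝ := (1 - y ^ 2) / (1 + y ^ 2)

/-- The potential `V(y) = (y⁴-6y²+1)/(1+y²)²`. -/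
def Vf (y : ℝ) : ℝ := (y ^ 4 - 6 * y ^ 2 + 1) / (1 + y ^ 2) ^ 2

/-- The linearized Hamiltonian `H f = -f'' - f'/y + V f / y²`. -/
def Hop (f : ℝ → ℝ) (y : ℝ) : ℝ :=
  -(deriv (deriv f) y) - deriv f y / y + Vf y * f y / y ^ 2

/-- The first order factor `A f = -f' + (Z/y) f`. -/
def Aop (f : ℝ → ℝ) (y : ℝ) : ℝ := -deriv f y + Zf y / y * f y

/-- The adjoint factor `A* f = f' + ((1+Z)/y) f`. -/
def Astar (f : ℝ → ℝ) (y : ℝ) : ℝ := deriv f y + (1 + Zf y) / y * f y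

/-- `A* A` with an arbitrary coefficient `W` in place of `Z`: the potential that comes out is the
Riccati expression `y W' + W²`. -/
theorem deriv_add_mul_factor_eq {W f : ℝ → ℝ} {y : ℝ} (hy : y ≠ 0)
    (hW : DifferentiableAt ℝ W y) (hf : DifferentiableAt ℝ f y)
    (hf' : DifferentiableAt ℝ (deriv f) y) :
    deriv (fun t => -deriv f t + W t / t * f t) y
        + (1 + W y) / y * (-deriv f y + W y / y * f y)
      = -(deriv (deriv f) y) - deriv f y / y
        + (y * deriv W y + W y ^ 2) * f y / y ^ 2 := by
  have hA : HasDerivAt (fun t => -deriv f t + W t / t * f t)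
      (-deriv (deriv f) y
        + ((deriv W y * y - W y * 1) / y ^ 2 * f y + W y / y * deriv f y)) y :=
    hf'.hasDerivAt.neg.add
      ((hW.hasDerivAt.div (hasDerivAt_id y) hy).mul hf.hasDerivAt)
  rw [hA.deriv]
  field_simp
  ring

theorem hasDerivAt_Zf (y : ℝ) : HasDerivAt Zf (-4 * y / (1 + y ^ 2) ^ 2) y :=
  (((hasDerivAt_pow 2 y).const_sub 1).div ((hasDerivAt_pow 2 y).const_add 1)
    (by positivity)).congr_deriv (by ring)

theorem Vf_eq_riccati (y : ℝ) : Vf y = y * deriv Zf y + Zf y ^ 2 := by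
  rw [(hasDerivAt_Zf y).deriv, Zf, Vf]
  field_simp
  ring

theorem Vf_div_sq {y : ℝ} (hy : y ≠ 0) : Vf y / y ^ 2 = 1 / y ^ 2 - 2 * (1 + Zf y) ^ 2 := by
  rw [Zf, Vf]
  field_simp
  ring

/-- The factorization `H = A* A` together with the potential identities
`V = y Z' + Z²` and `V/y² = 1/y² - 2(1+Z)²`. -/
theorem H_factorization (f : ℝ → ℝ)
    (hf : ∀ y > (0 : ℝ), DifferentiableAt ℝ f y)
    (hf' : ∀ y > (0 : ℝ), DifferentiableAt ℝ (deriv f) y) :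
    (∀ y > (0 : ℝ),
      Astar (fun t => Aop f t) y
        = -(deriv (deriv f) y) - deriv f y / y + Vf y * f y / y ^ 2 ∧
      Astar (fun t => Aop f t) y = Hop f y) ∧
    (∀ y > (0 : ℝ), Vf y = y * deriv Zf y + (Zf y) ^ 2) ∧
    (∀ y > (0 : ℝ), Vf y / y ^ 2 = 1 / y ^ 2 - 2 * (1 + Zf y) ^ 2) := by
  refine ⟨fun y hy => ?_, fun y _ => Vf_eq_riccati y, fun y hy => Vf_div_sq hy.ne'⟩
  have hAA : Astar (fun t => Aop f t) y
      = -(deriv (deriv f) y) - deriv f y / y + Vf y * f y / y ^ 2 := by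
    simp only [Astar, Aop]
    rw [deriv_add_mul_factor_eq hy.ne' (hasDerivAt_Zf y).differentiableAt (hf y hy) (hf' y hy),
      Vf_eq_riccati]
  exact ⟨hAA, hAA⟩

end
end

section
/- The functions Λφ(y) = 2y/(1+y²) and Γ(y) = (1/(4(1+y²)))·(y³ + 4y·log y − 1/y) satisfy: (i) H(Λφ) = 0 on (0,∞); (ii) H(Γ) = 0 on (0,∞); (iii) the Wronskian identity Λφ'(y)·Γ(y) − Γ'(y)·Λφ(y) = −1/y for all y > 0. -/
noncomputable section

/-- The resonance `Λφ(y) = 2y/(1+y²)`. -/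
def Lphi (y : ℝ) : ℝ := 2 * y / (1 + y ^ 2)

/-- The second element `Γ` of the kernel of `H`. -/
def Gam (y : ℝ) : ℝ :=
  (1 / (4 * (1 + y ^ 2))) * (y ^ 3 + 4 * y * Real.log y - 1 / y)

/-!
`H Λφ = 0` is a direct computation. `Γ` comes from `Λφ` by reduction of order: `Γ = Λφ · u` with
`u = y²/8 - 1/(8y²) + (log y)/2`, whose derivative `u' = (1+y²)²/(4y³)` makes the flux `y Λφ² u'`
identically `1`. Since `H (φ u) = u · H φ - (y φ)⁻¹ (y φ² u')'` for any `φ`, `u`, this gives `H Γ = 0`,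
and the Wronskian of `Λφ` and `Λφ · u` is `-Λφ² u' = -1/y`.
-/

open Filter Topology

theorem Hop_eq_of_hasDerivAt {f f' : ℝ → ℝ} {f'' y : ℝ}
    (hf : ∀ᶠ x in 𝓝 y, HasDerivAt f (f' x) x) (hf' : HasDerivAt f' f'' y) :
    Hop f y = -f'' - f' y / y + Vf y * f y / y ^ 2 := by
  have hderiv : deriv f =ᶠ[𝓝 y] f' := hf.mono fun x hx => hx.deriv
  rw [Hop, hderiv.deriv_eq, hf'.deriv, hf.self_of_nhds.deriv]

section ReductionOfOrder

variable {φ u φ' u' : ℝ → ℝ} {φ'' u'' y : ℝ}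

theorem Hop_mul_eq (hφ : ∀ᶠ x in 𝓝 y, HasDerivAt φ (φ' x) x)
    (hu : ∀ᶠ x in 𝓝 y, HasDerivAt u (u' x) x) (hφ' : HasDerivAt φ' φ'' y)
    (hu' : HasDerivAt u' u'' y) :
    Hop (φ * u) y = u y * Hop φ y - (φ y * u'' + 2 * φ' y * u' y + φ y * u' y / y) := by
  have hprod : ∀ᶠ x in 𝓝 y, HasDerivAt (φ * u) ((φ' * u + φ * u') x) x :=
    (hφ.and hu).mono fun x hx => hx.1.mul hx.2
  have hprod' := (hφ'.mul hu.self_of_nhds).add (hφ.self_of_nhds.mul hu')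
  rw [Hop_eq_of_hasDerivAt hprod hprod', Hop_eq_of_hasDerivAt hφ hφ']
  simp only [Pi.add_apply, Pi.mul_apply]
  ring

theorem Hop_mul_eq_zero (hy : y ≠ 0) (hφy : φ y ≠ 0) (hφ : ∀ᶠ x in 𝓝 y, HasDerivAt φ (φ' x) x)
    (hu : ∀ᶠ x in 𝓝 y, HasDerivAt u (u' x) x) (hφ' : HasDerivAt φ' φ'' y)
    (hu' : HasDerivAt u' u'' y) (hHφ : Hop φ y = 0) {c : ℝ}
    (hflux : ∀ᶠ x in 𝓝 y, x * φ x ^ 2 * u' x = c) :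
    Hop (φ * u) y = 0 := by
  have hflux' : HasDerivAt (fun x => x * φ x ^ 2 * u' x)
      (φ y ^ 2 * u' y + y * (2 * φ y * φ' y) * u' y + y * φ y ^ 2 * u'') y := by
    refine (((hasDerivAt_id y).mul (hφ.self_of_nhds.pow 2)).mul hu').congr_deriv ?_
    simp only [id, Pi.mul_apply, Pi.pow_apply]
    ring
  have hzero : φ y ^ 2 * u' y + y * (2 * φ y * φ' y) * u' y + y * φ y ^ 2 * u'' = 0 :=
    hflux'.unique ((hasDerivAt_const y c).congr_of_eventuallyEq hflux)
  have hdiv : φ y * u'' + 2 * φ' y * u' y + φ y * u' y / y =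
      (φ y ^ 2 * u' y + y * (2 * φ y * φ' y) * u' y + y * φ y ^ 2 * u'') / (y * φ y) := by
    field_simp
    ring
  rw [Hop_mul_eq hφ hu hφ' hu', hHφ, hdiv, hzero]
  ring

end ReductionOfOrder

theorem wronskian_mul {φ u : ℝ → ℝ} {φ' u' y : ℝ} (hφ : HasDerivAt φ φ' y)
    (hu : HasDerivAt u u' y) :
    deriv φ y * (φ * u) y - deriv (φ * u) y * φ y = -(φ y ^ 2 * u') := by
  rw [hφ.deriv, (hφ.mul hu).deriv, Pi.mul_apply]
  ring

theorem hasDerivAt_Lphi (y : ℝ) :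
    HasDerivAt Lphi ((2 - 2 * y ^ 2) / (1 + y ^ 2) ^ 2) y := by
  have hden : 1 + y ^ 2 ≠ 0 := by positivity
  refine (((hasDerivAt_id y).const_mul 2).div
    ((hasDerivAt_const y 1).add (hasDerivAt_pow 2 y)) hden).congr_deriv ?_
  simp only [id, Pi.add_apply]
  field_simp
  ring

theorem hasDerivAt_deriv_Lphi (y : ℝ) :
    HasDerivAt (fun x => (2 - 2 * x ^ 2) / (1 + x ^ 2) ^ 2)
      ((4 * y ^ 3 - 12 * y) / (1 + y ^ 2) ^ 3) y := by
  have hden : (1 + y ^ 2) ^ 2 ≠ 0 := by positivity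
  refine (((hasDerivAt_const y 2).sub ((hasDerivAt_pow 2 y).const_mul 2)).div
    (((hasDerivAt_const y 1).add (hasDerivAt_pow 2 y)).pow 2) hden).congr_deriv ?_
  simp only [Pi.add_apply, Pi.sub_apply, Pi.pow_apply]
  field_simp
  ring

theorem Hop_Lphi (y : ℝ) : Hop Lphi y = 0 := by
  rw [Hop_eq_of_hasDerivAt (Eventually.of_forall hasDerivAt_Lphi) (hasDerivAt_deriv_Lphi y)]
  have hden : 1 + y ^ 2 ≠ 0 := by positivity
  rcases eq_or_ne y 0 with rfl | hy
  · simp [Lphi]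
  · simp only [Vf, Lphi]
    field_simp
    ring

def gamQuot (y : ℝ) : ℝ := y ^ 2 / 8 - 1 / (8 * y ^ 2) + Real.log y / 2

theorem Gam_eq_Lphi_mul_gamQuot : Gam = Lphi * gamQuot := by
  funext y
  rcases eq_or_ne y 0 with rfl | hy
  · simp [Gam, Lphi]
  · have hden : 1 + y ^ 2 ≠ 0 := by positivity
    simp only [Gam, Lphi, gamQuot, Pi.mul_apply]
    field_simp
    ring

theorem hasDerivAt_gamQuot {y : ℝ} (hy : y ≠ 0) :
    HasDerivAt gamQuot ((1 + y ^ 2) ^ 2 / (4 * y ^ 3)) y := by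
  have hden : 8 * y ^ 2 ≠ 0 := by positivity
  refine ((((hasDerivAt_pow 2 y).div_const 8).sub
    ((hasDerivAt_const y 1).div ((hasDerivAt_pow 2 y).const_mul 8) hden)).add
    ((Real.hasDerivAt_log hy).div_const 2)).congr_deriv ?_
  field_simp
  ring

theorem mul_Lphi_sq_mul_deriv_gamQuot {y : ℝ} (hy : y ≠ 0) :
    y * Lphi y ^ 2 * ((1 + y ^ 2) ^ 2 / (4 * y ^ 3)) = 1 := by
  have hden : 1 + y ^ 2 ≠ 0 := by positivity
  simp only [Lphi]
  field_simp
  ring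

/-- `Λφ` and `Γ` span the kernel of `H` on `(0,∞)`, with Wronskian `-1/y`. -/
theorem kernel_of_H :
    (∀ y > (0 : ℝ), Hop Lphi y = 0) ∧
    (∀ y > (0 : ℝ), Hop Gam y = 0) ∧
    (∀ y > (0 : ℝ), deriv Lphi y * Gam y - deriv Gam y * Lphi y = -(1 / y)) := by
  have hnear {y : ℝ} (hy : y ≠ 0) : ∀ᶠ x in 𝓝 y, x ≠ 0 := eventually_ne_nhds hy
  refine ⟨fun y _ => Hop_Lphi y, fun y hy => ?_, fun y hy => ?_⟩
  · have hLphi : Lphi y ≠ 0 := by simp only [Lphi]; positivity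
    have hu' : DifferentiableAt ℝ (fun x : ℝ => (1 + x ^ 2) ^ 2 / (4 * x ^ 3)) y := by
      fun_prop (disch := positivity)
    rw [Gam_eq_Lphi_mul_gamQuot]
    exact Hop_mul_eq_zero hy.ne' hLphi (Eventually.of_forall hasDerivAt_Lphi)
      ((hnear hy.ne').mono fun x => hasDerivAt_gamQuot) (hasDerivAt_deriv_Lphi y)
      hu'.hasDerivAt (Hop_Lphi y) ((hnear hy.ne').mono fun x => mul_Lphi_sq_mul_deriv_gamQuot)
  · rw [Gam_eq_Lphi_mul_gamQuot, wronskian_mul (hasDerivAt_Lphi y) (hasDerivAt_gamQuot hy.ne'),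
      neg_inj, eq_div_iff hy.ne']
    linear_combination mul_Lphi_sq_mul_deriv_gamQuot hy.ne'

end
end

section
/- For every y > 0 one has the strict inequalities 0 < 2·log(1+y²) − 2y²/(1+y²) < y²/2. Consequently there exists a constant d₁ ∈ (0,1) such that for all y > 0, 0 ≤ 2·log(1+y²)/y² − 2/(1+y²) ≤ (1−d₁)/2. -/
/-!
With `t = y²`, the lower bound is `t / (1 + t) ≤ 2t / (t + 2) < log (1 + t)`. The upper bound is
tighter than it looks: `(2 log (1 + t) - 2t / (1 + t)) / t` peaks at about `0.432` near
`t = 2.16`, whereas `2 log (1 + t) - 2t / (1 + t) - c t` is monotone only for `c ≥ 1/2`.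
Writing `1 + t = x²` and bounding `log x` by its `[2/1]` Padé approximant at `1` turns the
bound `9/20 · t` into a quartic inequality for `x ≥ 1`.
-/

open Real Set

namespace Real

/- The difference of the two sides has derivative `(x - 1)³ / (x (2x + 1)²)`. -/
theorem log_le_sub_one_mul_add_five_div {x : ℝ} (hx : 1 ≤ x) :
    log x ≤ (x - 1) * (x + 5) / (4 * x + 2) := by
  let g : ℝ → ℝ := fun x ↦ (x - 1) * (x + 5) / (4 * x + 2) - log x
  have hg : ∀ x ∈ Ici (1 : ℝ), HasDerivAt g
      (((1 * (x + 5) + (x - 1) * 1) * (4 * x + 2) - (x - 1) * (x + 5) * 4) / (4 * x + 2) ^ 2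
        - x⁻¹) x := by
    intro x (hx : 1 ≤ x)
    have hnum : HasDerivAt (fun x : ℝ ↦ (x - 1) * (x + 5)) (1 * (x + 5) + (x - 1) * 1) x :=
      ((hasDerivAt_id' x).sub_const 1).fun_mul ((hasDerivAt_id' x).add_const 5)
    have hden : HasDerivAt (fun x : ℝ ↦ 4 * x + 2) 4 x := by
      simpa using ((hasDerivAt_id' x).const_mul 4).add_const 2
    exact (hnum.div hden (by linarith)).sub (hasDerivAt_log (by linarith))
  have hmono : MonotoneOn g (Ici 1) := by
    refine monotoneOn_of_hasDerivWithinAt_nonneg (convex_Ici 1)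
      (fun x hx ↦ (hg x hx).continuousAt.continuousWithinAt)
      (fun x hx ↦ (hg x (interior_subset hx)).hasDerivWithinAt) fun x hx ↦ ?_
    rw [interior_Ici] at hx
    have hx0 : 0 < x := by linarith [mem_Ioi.1 hx]
    have hx1 : 0 ≤ x - 1 := by linarith [mem_Ioi.1 hx]
    have hderiv : ((1 * (x + 5) + (x - 1) * 1) * (4 * x + 2) - (x - 1) * (x + 5) * 4)
        / (4 * x + 2) ^ 2 - x⁻¹ = 4 * (x - 1) ^ 3 / (x * (4 * x + 2) ^ 2) := by
      field_simp
      ring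
    rw [hderiv]
    positivity
  have := hmono self_mem_Ici hx hx
  simp only [g, sub_self, zero_mul, zero_div, log_one] at this
  linarith

end Real

theorem four_mul_log_sub_le {x : ℝ} (hx : 1 ≤ x) :
    4 * log x - 2 * (x ^ 2 - 1) / x ^ 2 ≤ 9 / 20 * (x ^ 2 - 1) := by
  have hpade := log_le_sub_one_mul_add_five_div hx
  have hquartic : 0 ≤ 18 * x ^ 4 - 13 * x ^ 3 - 111 * x ^ 2 + 120 * x + 40 := by
    nlinarith [sq_nonneg (x - 7 / 4), sq_nonneg (x ^ 2 - 3),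
      mul_nonneg (sub_nonneg.2 hx) (sq_nonneg (x - 7 / 4))]
  have hgap : 9 / 20 * (x ^ 2 - 1)
        - (4 * ((x - 1) * (x + 5) / (4 * x + 2)) - 2 * (x ^ 2 - 1) / x ^ 2)
      = (x - 1) * (18 * x ^ 4 - 13 * x ^ 3 - 111 * x ^ 2 + 120 * x + 40)
        / (20 * x ^ 2 * (2 * x + 1)) := by
    have : 0 < x := by linarith
    field_simp
    ring
  have : 0 ≤ x - 1 := by linarith
  have : 0 ≤ (x - 1) * (18 * x ^ 4 - 13 * x ^ 3 - 111 * x ^ 2 + 120 * x + 40)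
      / (20 * x ^ 2 * (2 * x + 1)) := by positivity
  linarith

theorem two_mul_log_one_add_sub_le {t : ℝ} (ht : 0 ≤ t) :
    2 * log (1 + t) - 2 * t / (1 + t) ≤ 9 / 20 * t := by
  have hx : 1 ≤ √(1 + t) := one_le_sqrt.2 (by linarith)
  have hsq : √(1 + t) ^ 2 = 1 + t := sq_sqrt (by linarith)
  have hlog : log (1 + t) = 2 * log √(1 + t) := by simpa [hsq] using log_pow (√(1 + t)) 2
  have := four_mul_log_sub_le hx
  rw [hsq, add_sub_cancel_left] at this
  rw [hlog]
  linarith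

theorem two_mul_log_one_add_sub_pos {t : ℝ} (ht : 0 < t) :
    0 < 2 * log (1 + t) - 2 * t / (1 + t) := by
  have hlog := lt_log_one_add_of_pos ht
  have : t / (1 + t) ≤ 2 * t / (t + 2) := by
    rw [div_le_div_iff₀ (by linarith) (by linarith)]
    nlinarith
  have : 2 * t / (1 + t) = 2 * (t / (1 + t)) := by ring
  linarith

/-- The key pointwise bound behind the gain-of-two-derivatives lemma:
`0 < 2 log(1+y²) - 2y²/(1+y²) < y²/2` on `(0,∞)`; consequently there is a
constant `d₁ ∈ (0,1)` with `0 ≤ 2 log(1+y²)/y² - 2/(1+y²) ≤ (1-d₁)/2`. -/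
theorem key_pointwise_bound :
    (∀ y > (0 : ℝ),
      0 < 2 * Real.log (1 + y ^ 2) - 2 * y ^ 2 / (1 + y ^ 2) ∧
      2 * Real.log (1 + y ^ 2) - 2 * y ^ 2 / (1 + y ^ 2) < y ^ 2 / 2) ∧
    ∃ d₁ ∈ Set.Ioo (0 : ℝ) 1, ∀ y > (0 : ℝ),
      0 ≤ 2 * Real.log (1 + y ^ 2) / y ^ 2 - 2 / (1 + y ^ 2) ∧
      2 * Real.log (1 + y ^ 2) / y ^ 2 - 2 / (1 + y ^ 2) ≤ (1 - d₁) / 2 := by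
  refine ⟨fun y hy ↦ ?_, 1 / 10, by norm_num, fun y hy ↦ ?_⟩
  · have hy2 : 0 < y ^ 2 := by positivity
    exact ⟨two_mul_log_one_add_sub_pos hy2,
      (two_mul_log_one_add_sub_le hy2.le).trans_lt (by linarith)⟩
  · have hy2 : 0 < y ^ 2 := by positivity
    have hratio : 2 * log (1 + y ^ 2) / y ^ 2 - 2 / (1 + y ^ 2)
        = (2 * log (1 + y ^ 2) - 2 * y ^ 2 / (1 + y ^ 2)) / y ^ 2 := by
      field_simp
    rw [hratio]
    exact ⟨div_nonneg (two_mul_log_one_add_sub_pos hy2).le hy2.le,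
      (div_le_iff₀ hy2).2 (by linarith [two_mul_log_one_add_sub_le hy2.le])⟩
end

section
/- Set L(y) = Z'(y) and G(y) = V'(y)/y for y > 0. Then: (i) L(y) = −4y/(1+y²)² and G(y) = 16(y²−1)/(1+y²)³; (ii) for every differentiable function f : (0,∞) → ℝ and every y > 0, A*(L·f)(y) + L(y)·(A f)(y) = G(y)·f(y). -/
/-! The derivative terms cancel: `A*(g f) + g (A f) = (g' + (1 + 2Z) g / y) f` for any
differentiable `g`, so the identity reduces to `L' + (1 + 2Z) L / y = G`, an identity of
rational functions once `L` and `G` are computed explicitly. -/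

noncomputable section

/-- `L(y) = Z'(y)`. -/
def Lf (y : ℝ) : ℝ := deriv Zf y

/-- `G(y) = V'(y)/y`. -/
def Gf (y : ℝ) : ℝ := deriv Vf y / y

theorem Astar_mul_add_mul_Aop {g f : ℝ → ℝ} {y : ℝ} (hg : DifferentiableAt ℝ g y)
    (hf : DifferentiableAt ℝ f y) :
    Astar (fun t => g t * f t) y + g y * Aop f y
      = (deriv g y + (1 + 2 * Zf y) / y * g y) * f y := by
  rw [Astar, Aop, deriv_fun_mul hg hf]
  ring

theorem hasDerivAt_one_add_sq_sq (y : ℝ) :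
    HasDerivAt (fun t : ℝ => (1 + t ^ 2) ^ 2) (4 * y * (1 + y ^ 2)) y := by
  refine (((hasDerivAt_pow 2 y).const_add 1).pow 2).congr_deriv ?_
  push_cast
  ring

theorem Lf_eq : Lf = fun y => -4 * y / (1 + y ^ 2) ^ 2 :=
  funext fun y => (hasDerivAt_Zf y).deriv

theorem hasDerivAt_Lf (y : ℝ) : HasDerivAt Lf ((12 * y ^ 2 - 4) / (1 + y ^ 2) ^ 3) y := by
  have hden : 1 + y ^ 2 ≠ 0 := by positivity
  rw [Lf_eq]
  refine (((hasDerivAt_id' y).const_mul (-4)).div (hasDerivAt_one_add_sq_sq y)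
    (pow_ne_zero 2 hden)).congr_deriv ?_
  field_simp
  ring

theorem hasDerivAt_Vf (y : ℝ) :
    HasDerivAt Vf (16 * y * (y ^ 2 - 1) / (1 + y ^ 2) ^ 3) y := by
  have hden : 1 + y ^ 2 ≠ 0 := by positivity
  have hnum : HasDerivAt (fun t : ℝ => t ^ 4 - 6 * t ^ 2 + 1) (4 * y ^ 3 - 12 * y) y := by
    refine (((hasDerivAt_pow 4 y).sub ((hasDerivAt_pow 2 y).const_mul 6)).add_const
      1).congr_deriv ?_
    push_cast
    ring
  refine (hnum.div (hasDerivAt_one_add_sq_sq y) (pow_ne_zero 2 hden)).congr_deriv ?_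
  field_simp
  ring

theorem Gf_eq {y : ℝ} (hy : y ≠ 0) : Gf y = 16 * (y ^ 2 - 1) / (1 + y ^ 2) ^ 3 := by
  rw [Gf, (hasDerivAt_Vf y).deriv]
  field_simp

theorem deriv_Lf_add_mul_Lf {y : ℝ} (hy : y ≠ 0) :
    deriv Lf y + (1 + 2 * Zf y) / y * Lf y = Gf y := by
  have hden : 1 + y ^ 2 ≠ 0 := by positivity
  rw [(hasDerivAt_Lf y).deriv, Gf_eq hy, Lf_eq, Zf]
  field_simp
  ring

/-- Explicit formulas for `L, G` and the structural identity
`A*(L f) + L (A f) = G f`. -/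
theorem LG_structure :
    (∀ y > (0 : ℝ),
      Lf y = -4 * y / (1 + y ^ 2) ^ 2 ∧
      Gf y = 16 * (y ^ 2 - 1) / (1 + y ^ 2) ^ 3) ∧
    (∀ f : ℝ → ℝ, (∀ y > (0 : ℝ), DifferentiableAt ℝ f y) →
      ∀ y > (0 : ℝ),
        Astar (fun t => Lf t * f t) y + Lf y * Aop f y = Gf y * f y) := by
  refine ⟨fun y hy => ⟨congrFun Lf_eq y, Gf_eq hy.ne'⟩, fun f hf y hy => ?_⟩
  rw [Astar_mul_add_mul_Aop (hasDerivAt_Lf y).differentiableAt (hf y hy),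
    deriv_Lf_add_mul_Lf hy.ne']
end
end

section
/- Let C ≥ 0, s₀ > 1, and b* ∈ (0,1) with C/|log b*| ≤ 1/2. Suppose b : [s₀,∞) → (0, b*) is C¹ and satisfies |b'(s) + b(s)²| ≤ C·b(s)²/|log b(s)| for all s ≥ s₀. Then s·b(s) → 1 as s → ∞; more precisely, there exist S ≥ s₀ and C' > 0 such that |b(s) − 1/s| ≤ C'/(s·log s) for all s ≥ S. -/
/-!
With `u = 1 / b` the equation reads `|u' - 1| ≤ C / log u`. The smallness of `C / |log b*|`
gives `u' ≥ 1/2`, so `u` grows linearly and `log u ≥ (log s) / 2`; hence `|u' - 1| ≤ 2C / log s`.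
Comparing with the majorant `4C s / log s`, whose derivative dominates `2C / log s` once
`log s ≥ 2`, yields `u(s) = s + O(s / log s)`, and inverting gives the bound on `b`.
-/

open Filter Topology Set Real

theorem Real.tendsto_div_log_atTop : Tendsto (fun x => x / log x) atTop atTop := by
  have hpos : ∀ᶠ x in atTop, log x / id x ∈ Ioi 0 := by
    filter_upwards [eventually_gt_atTop 1] with x hx
    exact div_pos (log_pos hx) (zero_lt_one.trans hx)
  convert (tendsto_nhdsWithin_iff.2
    ⟨isLittleO_log_id_atTop.tendsto_div_nhds_zero, hpos⟩).inv_tendsto_nhdsGT_zero using 1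
  ext x
  simp

theorem Real.hasDerivAt_div_log {x : ℝ} (hx : x ≠ 0) (hlog : log x ≠ 0) :
    HasDerivAt (fun t => t / log t) ((log x - 1) / log x ^ 2) x := by
  have h := (hasDerivAt_id' x).div (hasDerivAt_log hx) hlog
  rwa [one_mul, mul_inv_cancel₀ hx] at h

theorem exists_eventually_abs_le_add_of_abs_deriv_le {f f' B B' : ℝ → ℝ}
    (hf : ∀ᶠ x in atTop, HasDerivAt f (f' x) x) (hB : ∀ᶠ x in atTop, HasDerivAt B (B' x) x)
    (hle : ∀ᶠ x in atTop, |f' x| ≤ B' x) :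
    ∃ A, ∀ᶠ x in atTop, |f x| ≤ B x + A := by
  obtain ⟨a, ha⟩ := eventually_atTop.1 (hf.and (hB.and hle))
  refine ⟨|f a| - B a, eventually_atTop.2 ⟨a, fun x hx => ?_⟩⟩
  have hB' : ∀ t ≥ a, HasDerivAt (fun t => B t + (|f a| - B a)) (B' t) t :=
    fun t ht => (ha t ht).2.1.add_const _
  refine image_norm_le_of_norm_deriv_right_le_deriv_boundary' (f := f)
    (fun t ht => (ha t ht.1).1.continuousAt.continuousWithinAt)
    (fun t ht => (ha t ht.1).1.hasDerivWithinAt) (by simp)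
    (fun t ht => (hB' t ht.1).continuousAt.continuousWithinAt)
    (fun t ht => (hB' t ht.1).hasDerivWithinAt) (fun t ht => (ha t ht.1).2.2) ⟨hx, le_rfl⟩

theorem eventually_div_four_le_of_abs_deriv_sub_one_le {u u' : ℝ → ℝ}
    (hu : ∀ᶠ x in atTop, HasDerivAt u (u' x) x) (hu' : ∀ᶠ x in atTop, |u' x - 1| ≤ 1 / 2) :
    ∀ᶠ x in atTop, x / 4 ≤ u x := by
  obtain ⟨A, hA⟩ := exists_eventually_abs_le_add_of_abs_deriv_le (f := fun x => u x - x)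
    (B := fun x => x / 2) (hu.mono fun x hx => hx.sub (hasDerivAt_id' x))
    (.of_forall fun x => (hasDerivAt_id' x).div_const 2) hu'
  filter_upwards [hA, eventually_ge_atTop (4 * A)] with x hx hxA
  linarith [(abs_le.1 hx).1]

theorem eventually_log_div_two_le_log {u : ℝ → ℝ} (h : ∀ᶠ x in atTop, x / 4 ≤ u x) :
    ∀ᶠ x in atTop, log x / 2 ≤ log (u x) := by
  filter_upwards [h, eventually_ge_atTop 16] with x hx hx16
  have hlog16 : log 16 = 2 * log 4 := by
    rw [show (16 : ℝ) = 4 ^ 2 by norm_num, log_pow, Nat.cast_ofNat]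
  have h16 : log 16 ≤ log x := log_le_log (by norm_num) hx16
  have hquarter : log (x / 4) ≤ log (u x) := log_le_log (by positivity) hx
  rw [log_div (by positivity) (by norm_num)] at hquarter
  linarith

theorem eventually_abs_sub_le_mul_div_log {u u' : ℝ → ℝ} {C : ℝ} (hC : 0 ≤ C)
    (hu : ∀ᶠ x in atTop, HasDerivAt u (u' x) x) (hhalf : ∀ᶠ x in atTop, |u' x - 1| ≤ 1 / 2)
    (hlog : ∀ᶠ x in atTop, |u' x - 1| ≤ C / log (u x)) :
    ∀ᶠ x in atTop, |u x - x| ≤ (4 * C + 1) * (x / log x) := by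
  have hlogx : ∀ᶠ x in atTop, 2 ≤ log x := tendsto_log_atTop.eventually_ge_atTop 2
  have hmajorant : ∀ᶠ x in atTop,
      HasDerivAt (fun t => 4 * C * (t / log t)) (4 * C * ((log x - 1) / log x ^ 2)) x := by
    filter_upwards [hlogx, eventually_gt_atTop 0] with x hx hx0
    exact (hasDerivAt_div_log hx0.ne' (by linarith)).const_mul _
  have hderiv : ∀ᶠ x in atTop, |u' x - 1| ≤ 4 * C * ((log x - 1) / log x ^ 2) := by
    filter_upwards [hlog, eventually_log_div_two_le_log
      (eventually_div_four_le_of_abs_deriv_sub_one_le hu hhalf), hlogx] with x hx hux hx2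
    have hL : 0 < log x := by linarith
    calc |u' x - 1| ≤ C / log (u x) := hx
      _ ≤ C / (log x / 2) := by gcongr
      _ ≤ 4 * C * ((log x - 1) / log x ^ 2) := by
        rw [mul_div_assoc', div_le_div_iff₀ (by positivity) (by positivity)]
        nlinarith [mul_nonneg hC (sub_nonneg.2 hx2)]
  obtain ⟨A, hA⟩ := exists_eventually_abs_le_add_of_abs_deriv_le (f := fun x => u x - x)
    (hu.mono fun x hx => hx.sub (hasDerivAt_id' x)) hmajorant hderiv
  filter_upwards [hA, tendsto_div_log_atTop.eventually_ge_atTop A] with x hx hxA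
  linarith

theorem abs_inv_sub_inv_le_of_abs_sub_le {x y M : ℝ} (hx : 0 < x) (hy : x / 4 ≤ y)
    (h : |y - x| ≤ M * (x / log x)) : |y⁻¹ - x⁻¹| ≤ 4 * M / (x * log x) := by
  have hy0 : 0 < y := (div_pos hx four_pos).trans_le hy
  calc |y⁻¹ - x⁻¹| = |y - x| / (x * y) := by
        rw [inv_sub_inv hy0.ne' hx.ne', abs_div, abs_sub_comm, abs_of_pos (mul_pos hy0 hx),
          mul_comm]
    _ ≤ M * (x / log x) / (x * (x / 4)) :=
        div_le_div₀ ((abs_nonneg _).trans h) h (by positivity) (by gcongr)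
    _ = 4 * M / (x * log x) := by field_simp

theorem tendsto_mul_of_abs_sub_inv_le {b : ℝ → ℝ} {K : ℝ}
    (h : ∀ᶠ x in atTop, |b x - x⁻¹| ≤ K / (x * log x)) :
    Tendsto (fun x => x * b x) atTop (𝓝 1) := by
  rw [← tendsto_sub_nhds_zero_iff]
  refine squeeze_zero_norm' ?_ (tendsto_log_atTop.const_div_atTop K)
  filter_upwards [h, eventually_gt_atTop 0] with x hx hx0
  calc ‖x * b x - 1‖ = x * |b x - x⁻¹| := by
        rw [norm_eq_abs, show x * b x - 1 = x * (b x - x⁻¹) by field_simp, abs_mul,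
          abs_of_pos hx0]
    _ ≤ x * (K / (x * log x)) := by gcongr
    _ = K / log x := by field_simp

theorem abs_neg_div_sq_sub_one_le_div_log_inv {y d C : ℝ} (hy0 : 0 < y) (hy1 : y < 1)
    (h : |d + y ^ 2| ≤ C * y ^ 2 / |log y|) : |-d / y ^ 2 - 1| ≤ C / log y⁻¹ := by
  have hsq : 0 < y ^ 2 := by positivity
  rw [log_inv, ← abs_of_neg (log_neg hy0 hy1),
    show -d / y ^ 2 - 1 = -((d + y ^ 2) / y ^ 2) by field_simp; ring, abs_neg, abs_div,
    abs_of_pos hsq, div_le_iff₀ hsq]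
  exact h.trans_eq (mul_div_right_comm _ _ _)

theorem abs_log_le_log_inv {y z : ℝ} (hy : 0 < y) (hyz : y ≤ z) (hz : z < 1) :
    |log z| ≤ log y⁻¹ := by
  rw [abs_of_neg (log_neg (hy.trans_le hyz) hz), log_inv]
  exact neg_le_neg (log_le_log hy hyz)

theorem b_modulation_asymptotics_general (C : ℝ) (hC : 0 ≤ C) (s₀ : ℝ)
    (bstar : ℝ) (hbstar : bstar ∈ Set.Ioo (0 : ℝ) 1)
    (hCbstar : C / |Real.log bstar| ≤ 1 / 2)
    (b : ℝ → ℝ)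
    (hrange : ∀ s ≥ s₀, b s ∈ Set.Ioo 0 bstar)
    (hC1 : ContDiffOn ℝ 1 b (Set.Ici s₀))
    (hODE : ∀ s ≥ s₀,
      |derivWithin b (Set.Ici s₀) s + (b s) ^ 2|
        ≤ C * (b s) ^ 2 / |Real.log (b s)|) :
    Tendsto (fun s => s * b s) atTop (𝓝 1) ∧
    ∃ S ≥ s₀, ∃ C' > (0 : ℝ), ∀ s ≥ S,
      |b s - 1 / s| ≤ C' / (s * Real.log s) := by
  set b' := derivWithin b (Ici s₀)
  have hu : ∀ᶠ s in atTop, HasDerivAt (fun s => (b s)⁻¹) (-b' s / b s ^ 2) s := by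
    filter_upwards [eventually_gt_atTop s₀] with s hs
    exact ((hC1.differentiableOn one_ne_zero s hs.le).hasDerivWithinAt.hasDerivAt
      (Ici_mem_nhds hs)).inv (hrange s hs.le).1.ne'
  have hdev : ∀ s ≥ s₀, |-b' s / b s ^ 2 - 1| ≤ C / log (b s)⁻¹ := fun s hs =>
    abs_neg_div_sq_sub_one_le_div_log_inv (hrange s hs).1 ((hrange s hs).2.trans hbstar.2)
      (hODE s hs)
  have hhalf : ∀ s ≥ s₀, |-b' s / b s ^ 2 - 1| ≤ 1 / 2 := fun s hs => by
    have hlog_pos : 0 < |log bstar| := abs_pos.2 (log_neg hbstar.1 hbstar.2).ne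
    have hlog := abs_log_le_log_inv (hrange s hs).1 (hrange s hs).2.le hbstar.2
    exact (hdev s hs).trans (le_trans (by gcongr) hCbstar)
  have hgrow := eventually_div_four_le_of_abs_deriv_sub_one_le hu
    ((eventually_ge_atTop s₀).mono hhalf)
  have hclose := eventually_abs_sub_le_mul_div_log hC hu ((eventually_ge_atTop s₀).mono hhalf)
    ((eventually_ge_atTop s₀).mono hdev)
  have hbound : ∀ᶠ s in atTop, |b s - s⁻¹| ≤ 4 * (4 * C + 1) / (s * log s) := by
    filter_upwards [hgrow, hclose, eventually_gt_atTop 0] with s hsu hus hs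
    simpa using abs_inv_sub_inv_le_of_abs_sub_le hs hsu hus
  obtain ⟨S, hS⟩ := eventually_atTop.1 hbound
  refine ⟨tendsto_mul_of_abs_sub_inv_le hbound, max S s₀, le_max_right _ _, 4 * (4 * C + 1),
    by positivity, fun s hs => ?_⟩
  rw [one_div]
  exact hS s (le_of_max_le_left hs)

/-- ODE asymptotics for the modulation parameter `b`: if `0 < b < b* < 1` on
`[s₀,∞)` and `|b' + b²| ≤ C b²/|log b|` with `C/|log b*| ≤ 1/2`, then
`s·b(s) → 1`, and more precisely `b(s) = 1/s + O(1/(s log s))`. -/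
theorem b_modulation_asymptotics (C : ℝ) (hC : 0 ≤ C) (s₀ : ℝ) (hs₀ : 1 < s₀)
    (bstar : ℝ) (hbstar : bstar ∈ Set.Ioo (0 : ℝ) 1)
    (hCbstar : C / |Real.log bstar| ≤ 1 / 2)
    (b : ℝ → ℝ)
    (hrange : ∀ s ≥ s₀, b s ∈ Set.Ioo 0 bstar)
    (hC1 : ContDiffOn ℝ 1 b (Set.Ici s₀))
    (hODE : ∀ s ≥ s₀,
      |derivWithin b (Set.Ici s₀) s + (b s) ^ 2|
        ≤ C * (b s) ^ 2 / |Real.log (b s)|) :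
    Tendsto (fun s => s * b s) atTop (𝓝 1) ∧
    ∃ S ≥ s₀, ∃ C' > (0 : ℝ), ∀ s ≥ S,
      |b s - 1 / s| ≤ C' / (s * Real.log s) :=
  b_modulation_asymptotics_general C hC s₀ bstar hbstar hCbstar b hrange hC1 hODE
end

section
/- Let T > 0, c > 0, and let λ : [0,T) → (0,1) be C¹ with λ(t) → 0 as t → T⁻ and λ'(t)·(log λ(t))² → −c as t → T⁻. Then λ(t)·(log(T−t))²/(T−t) → c as t → T⁻. -/
open Filter Topology Real Set

/-!
`G x = x ((log x - 1)² + 1)` is the antiderivative of `(log x)²` vanishing at `0⁺`, so the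
hypothesis says `(G ∘ λ)' → -c` and L'Hôpital's rule gives `G(λ(t)) ∼ c (T - t)`, that is
`λ (log λ)² ∼ c (T - t)`. Taking logarithms, `log (T - t) = log λ + 2 log |log λ| + O(1)`
`= log λ (1 + o(1))`, so `(log λ)²` may be replaced by `(log (T - t))²`.
-/

noncomputable def primitiveLogSq (x : ℝ) : ℝ := x * ((log x - 1) ^ 2 + 1)

lemma primitiveLogSq_pos {x : ℝ} (hx : 0 < x) : 0 < primitiveLogSq x := by
  unfold primitiveLogSq; positivity

lemma hasDerivAt_primitiveLogSq {x : ℝ} (hx : x ≠ 0) :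
    HasDerivAt primitiveLogSq (log x ^ 2) x := by
  unfold primitiveLogSq
  refine ((hasDerivAt_id' x).mul
    ((((hasDerivAt_log hx).sub_const 1).pow 2).add_const 1)).congr_deriv ?_
  simp only [Pi.pow_apply]
  field_simp
  ring

lemma tendsto_mul_log_sq_nhdsGT_zero :
    Tendsto (fun x => x * log x ^ 2) (𝓝[>] 0) (𝓝 0) := by
  have h := (tendsto_pow_log_div_mul_add_atTop 1 0 2 one_ne_zero).comp tendsto_inv_nhdsGT_zero
  refine h.congr fun x => ?_
  simp [log_inv, div_eq_mul_inv, mul_comm]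

lemma tendsto_primitiveLogSq_nhdsGT_zero :
    Tendsto primitiveLogSq (𝓝[>] 0) (𝓝 0) := by
  have hmul : Tendsto (fun x => x * log x) (𝓝[>] 0) (𝓝 0) := by
    simpa using continuous_mul_log.continuousAt.tendsto.mono_left (nhdsWithin_le_nhds (a := 0))
  have hid : Tendsto (fun x : ℝ => x) (𝓝[>] 0) (𝓝 0) := nhdsWithin_le_nhds
  have h := (tendsto_mul_log_sq_nhdsGT_zero.sub (hmul.const_mul 2)).add (hid.const_mul 2)
  simp only [mul_zero, sub_zero, add_zero] at h
  exact h.congr fun x => by unfold primitiveLogSq; ring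

lemma tendsto_mul_log_sq_div_primitiveLogSq_nhdsGT_zero :
    Tendsto (fun x => x * log x ^ 2 / primitiveLogSq x) (𝓝[>] 0) (𝓝 1) := by
  have hinv : Tendsto (fun x => (log x)⁻¹) (𝓝[>] 0) (𝓝 0) :=
    tendsto_inv_atBot_zero.comp tendsto_log_nhdsGT_zero
  have h : Tendsto (fun x => ((1 - (log x)⁻¹) ^ 2 + (log x)⁻¹ ^ 2)⁻¹)
      (𝓝[>] 0) (𝓝 1) := by
    simpa using (((tendsto_const_nhds (x := (1 : ℝ))).sub hinv).pow 2 |>.add (hinv.pow 2)).inv₀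
      (by norm_num)
  refine h.congr' ?_
  filter_upwards [self_mem_nhdsWithin, tendsto_log_nhdsGT_zero.eventually_lt_atBot 0]
    with x hx hlog
  unfold primitiveLogSq
  rw [mul_div_mul_left _ _ (ne_of_gt hx)]
  have := hlog.ne
  field_simp

lemma tendsto_div_sub_nhdsLT_of_hasDerivAt {F F' : ℝ → ℝ} {T c : ℝ}
    (hF : ∀ᶠ t in 𝓝[<] T, HasDerivAt F (F' t) t) (hF' : Tendsto F' (𝓝[<] T) (𝓝 (-c)))
    (hF0 : Tendsto F (𝓝[<] T) (𝓝 0)) :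
    Tendsto (fun t => F t / (T - t)) (𝓝[<] T) (𝓝 c) := by
  refine HasDerivAt.lhopital_zero_nhdsLT hF
    (Eventually.of_forall fun t => (hasDerivAt_id t).const_sub T)
    (Eventually.of_forall fun _ => by norm_num) hF0 ?_
    (by simpa only [div_neg, div_one, neg_neg] using hF'.neg)
  simpa using ((continuous_sub_left T).tendsto T).mono_left (nhdsWithin_le_nhds (s := Iio T))

lemma tendsto_div_of_tendsto_sub_add_mul_log {α : Type*} {l : Filter α} {L M : α → ℝ}
    {a k : ℝ} (hL : Tendsto L l atTop)
    (h : Tendsto (fun x => M x - L x + k * log (L x)) l (𝓝 a)) :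
    Tendsto (fun x => M x / L x) l (𝓝 1) := by
  have hlog : Tendsto (fun x => log (L x) / L x) l (𝓝 0) :=
    isLittleO_log_id_atTop.tendsto_div_nhds_zero.comp hL
  have h' := ((h.div_atTop hL).sub (hlog.const_mul k)).const_add 1
  simp only [mul_zero, sub_zero, add_zero] at h'
  refine h'.congr' ?_
  filter_upwards [hL.eventually_gt_atTop 0] with x hx
  field_simp
  ring

theorem tendsto_mul_log_sq_div_of_tendsto {α : Type*} {l : Filter α} {x y : α → ℝ} {c : ℝ}
    (hc : 0 < c) (hx : Tendsto x l (𝓝[>] 0))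
    (h : Tendsto (fun t => x t * log (x t) ^ 2 / y t) l (𝓝 c)) :
    Tendsto (fun t => x t * log (y t) ^ 2 / y t) l (𝓝 c) := by
  have hlogx : Tendsto (fun t => log (x t)) l atBot := tendsto_log_nhdsGT_zero.comp hx
  have hev : ∀ᶠ t in l, 0 < x t ∧ log (x t) < 0 ∧ y t ≠ 0 := by
    filter_upwards [hx.eventually self_mem_nhdsWithin, hlogx.eventually_lt_atBot 0,
      h.eventually_const_lt hc] with t hxt hlt hq
    exact ⟨hxt, hlt, fun h0 => by simp [h0] at hq⟩
  have hratio : Tendsto (fun t => -log (y t) / -log (x t)) l (𝓝 1) := by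
    refine tendsto_div_of_tendsto_sub_add_mul_log (k := 2) (tendsto_neg_atBot_atTop.comp hlogx)
      (((continuousAt_log hc.ne').tendsto.comp h).congr' ?_)
    filter_upwards [hev] with t ⟨hxt, hlt, hy⟩
    simp only [Function.comp_apply]
    rw [log_div (mul_ne_zero hxt.ne' (pow_ne_zero 2 hlt.ne)) hy,
      log_mul hxt.ne' (pow_ne_zero 2 hlt.ne), log_pow,
      ← log_neg_eq_log (log (x t))]
    push_cast
    ring
  have h' := h.mul (hratio.pow 2)
  rw [one_pow, mul_one] at h'
  refine h'.congr' ?_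
  filter_upwards [hev] with t ⟨_, hlt, _⟩
  have := hlt.ne
  field_simp

/-- Conversion of the differential asymptotics `λ'(t)(log λ(t))² → -c` into the
blow-up rate `λ(t) ∼ c (T-t)/|log(T-t)|²` as `t → T⁻`. -/
theorem blowup_rate_from_derivative (T c : ℝ) (hT : 0 < T) (hc : 0 < c)
    (lam : ℝ → ℝ)
    (hrange : ∀ t ∈ Set.Ico (0 : ℝ) T, lam t ∈ Set.Ioo (0 : ℝ) 1)
    (hC1 : ContDiffOn ℝ 1 lam (Set.Ico 0 T))
    (hlim0 : Tendsto lam (𝓝[<] T) (𝓝 0))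
    (hderiv : Tendsto (fun t => deriv lam t * (Real.log (lam t)) ^ 2)
      (𝓝[<] T) (𝓝 (-c))) :
    Tendsto (fun t => lam t * (Real.log (T - t)) ^ 2 / (T - t))
      (𝓝[<] T) (𝓝 c) := by
  have hnear : ∀ᶠ t in 𝓝[<] T, t ∈ Ioo 0 T := Ioo_mem_nhdsLT hT
  have hpos : ∀ᶠ t in 𝓝[<] T, 0 < lam t :=
    hnear.mono fun t ht => (hrange t (Ioo_subset_Ico_self ht)).1
  have hlam : Tendsto lam (𝓝[<] T) (𝓝[>] 0) := tendsto_nhdsWithin_iff.2 ⟨hlim0, hpos⟩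
  have hG : ∀ᶠ t in 𝓝[<] T,
      HasDerivAt (primitiveLogSq ∘ lam) (deriv lam t * log (lam t) ^ 2) t := by
    filter_upwards [hnear] with t ht
    have hdiff : DifferentiableAt ℝ lam t :=
      (hC1.contDiffAt (Ico_mem_nhds ht.1 ht.2)).differentiableAt one_ne_zero
    rw [mul_comm]
    exact (hasDerivAt_primitiveLogSq (hrange t (Ioo_subset_Ico_self ht)).1.ne').comp t
      hdiff.hasDerivAt
  have hGrate := (tendsto_div_sub_nhdsLT_of_hasDerivAt hG hderiv
    (tendsto_primitiveLogSq_nhdsGT_zero.comp hlam)).mul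
    (tendsto_mul_log_sq_div_primitiveLogSq_nhdsGT_zero.comp hlam)
  rw [mul_one] at hGrate
  refine tendsto_mul_log_sq_div_of_tendsto hc hlam (hGrate.congr' ?_)
  filter_upwards [hpos] with t ht
  have := (primitiveLogSq_pos ht).ne'
  simp only [Function.comp_apply]
  field_simp
end
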